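/- arXiv:1403.3862 — 5 statements merged into one kernel-verified Lean document; each statement's English description precedes it below -/
import Mathlib

section
/- If f: ℝᵐ → ℝ is strongly convex with parameter l > 0 and A ∈ ℝ^{m×n} is any matrix, then F(x) := f(Ax) is optimally strongly convex with respect to its solution set S: for all x, F(x) − F(P_S(x)) ≥ (l·c/2)·‖x − P_S(x)‖² for some constant c > 0 depending on A, where P_S is the Euclidean projection onto the (assumed nonempty) set S of minimizers of F. -/
/-!
Write `T` for the linear map `x ↦ A x` and `p = P_S(x)`. Comparing `F` at `p` with `F` at the
midpoint of `x` and `p`, strong convexity of `f` gives `F x - F p ≥ l/4 · ‖T (x - p)‖²`.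
Since `F` only depends on `T x`, the set `S` contains `p + ker T`, so the nearest-point property
of `p` forces `x - p ⟂ ker T`; on `(ker T)ᗮ` the map `T` is injective, hence bounded below
(Hoffman's bound), which turns `‖T (x - p)‖²` into `c · ‖x - p‖²`.
-/

open Set

lemma StrongConvexOn.quarter_mul_sq_norm_map_sub_le {E F : Type*} [AddCommGroup E] [Module ℝ E]
    [NormedAddCommGroup F] [NormedSpace ℝ F] {m : ℝ} {f : F → ℝ} (hf : StrongConvexOn univ m f)
    (T : E →ₗ[ℝ] F) {z : E} (hz : ∀ y, f (T z) ≤ f (T y)) (x : E) :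
    m / 4 * ‖T x - T z‖ ^ 2 ≤ f (T x) - f (T z) := by
  have hmid := hf.2 (mem_univ (T x)) (mem_univ (T z)) (by norm_num : (0 : ℝ) ≤ 1 / 2)
    (by norm_num : (0 : ℝ) ≤ 1 / 2) (by norm_num)
  rw [← map_smul, ← map_smul, ← map_add] at hmid
  have hz_le_mid := hz ((1 / 2 : ℝ) • x + (1 / 2 : ℝ) • z)
  simp only [smul_eq_mul] at hmid
  linarith

lemma mem_orthogonal_of_forall_norm_le_norm_sub {E : Type*} [NormedAddCommGroup E]
    [InnerProductSpace ℝ E] (K : Submodule ℝ E) {v : E} (hv : ∀ w ∈ K, ‖v‖ ≤ ‖v - w‖) :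
    v ∈ Kᗮ := by
  have hinf : ‖v - 0‖ = ⨅ w : (K : Set E), ‖v - w‖ := by
    have hbdd : BddBelow (range fun w : (K : Set E) => ‖v - w‖) :=
      ⟨0, by rintro _ ⟨w, rfl⟩; positivity⟩
    exact le_antisymm (le_ciInf fun w => by simpa using hv w w.2)
      (by simpa using ciInf_le hbdd ⟨0, K.zero_mem⟩)
  rw [K.mem_orthogonal']
  intro w hw
  simpa using (K.norm_eq_iInf_iff_real_inner_eq_zero K.zero_mem).1 hinf w hw

lemma LinearMap.exists_pos_mul_sq_norm_le_of_mem_ker_orthogonal {E F : Type*}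
    [NormedAddCommGroup E] [InnerProductSpace ℝ E] [FiniteDimensional ℝ E]
    [NormedAddCommGroup F] [NormedSpace ℝ F] (T : E →ₗ[ℝ] F) :
    ∃ c > 0, ∀ v ∈ (LinearMap.ker T)ᗮ, c * ‖v‖ ^ 2 ≤ ‖T v‖ ^ 2 := by
  have hinj : LinearMap.ker (T ∘ₗ (LinearMap.ker T)ᗮ.subtype) = ⊥ := by
    rw [LinearMap.ker_eq_bot']
    rintro ⟨v, hv⟩ hTv
    exact Subtype.ext (Submodule.inf_orthogonal_eq_bot _ |>.le ⟨hTv, hv⟩)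
  obtain ⟨K, hK, hanti⟩ := (T ∘ₗ (LinearMap.ker T)ᗮ.subtype).exists_antilipschitzWith hinj
  refine ⟨1 / (K : ℝ) ^ 2, by positivity, fun v hv => ?_⟩
  have hle : ‖v‖ ≤ K * ‖T v‖ := by
    simpa using hanti.le_mul_dist ⟨v, hv⟩ 0
  rw [div_mul_eq_mul_div, one_mul, div_le_iff₀ (by positivity), ← mul_pow, mul_comm]
  gcongr

theorem stmt_5_general {m n : ℕ} (f : EuclideanSpace ℝ (Fin m) → ℝ) (l : ℝ) (hl : 0 < l)
    (hf : StrongConvexOn Set.univ l f) (A : Matrix (Fin m) (Fin n) ℝ)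
    (F : EuclideanSpace ℝ (Fin n) → ℝ) (hF : ∀ x, F x = f (WithLp.toLp 2 (A.mulVec x)))
    (S : Set (EuclideanSpace ℝ (Fin n))) (hS : S = {x | ∀ y, F x ≤ F y})
    (proj : EuclideanSpace ℝ (Fin n) → EuclideanSpace ℝ (Fin n))
    (hproj : ∀ x, proj x ∈ S ∧ ∀ y ∈ S, ‖x - proj x‖ ≤ ‖x - y‖) :
    ∃ c : ℝ, 0 < c ∧ ∀ x, F x - F (proj x) ≥ l * c / 2 * ‖x - proj x‖ ^ 2 := by
  set T := Matrix.toEuclideanLin A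
  have hFT : ∀ x, F x = f (T x) := hF
  obtain ⟨c, hc, hHoffman⟩ := T.exists_pos_mul_sq_norm_le_of_mem_ker_orthogonal
  refine ⟨c / 2, by positivity, fun x => ?_⟩
  obtain ⟨hpS, hp_nearest⟩ := hproj x
  have hp_min : ∀ y, f (T (proj x)) ≤ f (T y) := by
    simpa only [hS, Set.mem_ofPred_eq, hFT] using hpS
  have horth : x - proj x ∈ (LinearMap.ker T)ᗮ := by
    refine mem_orthogonal_of_forall_norm_le_norm_sub _ fun w hw => ?_
    have hpw : proj x + w ∈ S := by
      simpa only [hS, Set.mem_ofPred_eq, hFT, map_add, LinearMap.mem_ker.1 hw, add_zero] using hp_min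
    simpa only [sub_add_eq_sub_sub] using hp_nearest _ hpw
  calc l * (c / 2) / 2 * ‖x - proj x‖ ^ 2 = l / 4 * (c * ‖x - proj x‖ ^ 2) := by ring
    _ ≤ l / 4 * ‖T x - T (proj x)‖ ^ 2 := by
      rw [← map_sub]
      gcongr
      exact hHoffman _ horth
    _ ≤ F x - F (proj x) := by
      simpa only [hFT] using hf.quarter_mul_sq_norm_map_sub_le T hp_min x

theorem stmt_5 {m n : ℕ} (f : EuclideanSpace ℝ (Fin m) → ℝ) (l : ℝ) (hl : 0 < l)
    (hf : StrongConvexOn Set.univ l f) (A : Matrix (Fin m) (Fin n) ℝ)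
    (F : EuclideanSpace ℝ (Fin n) → ℝ) (hF : ∀ x, F x = f (WithLp.toLp 2 (A.mulVec x)))
    (S : Set (EuclideanSpace ℝ (Fin n))) (hS : S = {x | ∀ y, F x ≤ F y})
    (hSne : S.Nonempty)
    (proj : EuclideanSpace ℝ (Fin n) → EuclideanSpace ℝ (Fin n))
    (hproj : ∀ x, proj x ∈ S ∧ ∀ y ∈ S, ‖x - proj x‖ ≤ ‖x - y‖) :
    ∃ c : ℝ, 0 < c ∧ ∀ x, F x - F (proj x) ≥ l * c / 2 * ‖x - proj x‖ ^ 2 :=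
  stmt_5_general f l hl hf A F hF S hS proj hproj
end

section
/- Let f be strongly convex with parameter l > 0 and A ∈ ℝ^{m×n} arbitrary. Then the vector y* := A x* is the same for every minimizer x* of the function x ↦ f(Ax); i.e., the image under A of the solution set is a single point. -/
/-! A strongly convex function with positive modulus is strictly convex, so it has at most one
minimizer on any convex set. The points `A x` for minimizers `x` of `f ∘ A` all minimize `f` on
the range of `A`, a subspace, hence coincide. -/

theorem StrictConvexOn.map_eq_of_forall_le_comp {𝕜 E F β : Type*} [Field 𝕜] [LinearOrder 𝕜]
    [IsStrictOrderedRing 𝕜] [AddCommGroup E] [Module 𝕜 E] [AddCommGroup F] [Module 𝕜 F]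
    [AddCommMonoid β] [PartialOrder β] [IsOrderedAddMonoid β] [Module 𝕜 β] [PosSMulMono 𝕜 β]
    {f : E → β} (hf : StrictConvexOn 𝕜 Set.univ f) (L : F →ₗ[𝕜] E) {x₁ x₂ : F}
    (hx₁ : ∀ y, f (L x₁) ≤ f (L y)) (hx₂ : ∀ y, f (L x₂) ≤ f (L y)) :
    L x₁ = L x₂ := by
  have hfL : StrictConvexOn 𝕜 (Set.range L) f :=
    hf.subset (Set.subset_univ _) (LinearMap.coe_range L ▸ (LinearMap.range L).convex)
  have isMinOn_of_forall_le {x : F} (hx : ∀ y, f (L x) ≤ f (L y)) :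
      IsMinOn f (Set.range L) (L x) := by
    rintro _ ⟨y, rfl⟩
    exact hx y
  exact hfL.eq_of_isMinOn (isMinOn_of_forall_le hx₁) (isMinOn_of_forall_le hx₂) ⟨x₁, rfl⟩
    ⟨x₂, rfl⟩

theorem stmt_6 {m n : ℕ} (f : EuclideanSpace ℝ (Fin m) → ℝ) (l : ℝ) (hl : 0 < l)
    (hf : StrongConvexOn Set.univ l f) (A : Matrix (Fin m) (Fin n) ℝ)
    (F : EuclideanSpace ℝ (Fin n) → ℝ) (hF : ∀ x, F x = f (WithLp.toLp 2 (A.mulVec x)))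
    (x₁ x₂ : EuclideanSpace ℝ (Fin n))
    (hx₁ : ∀ y, F x₁ ≤ F y) (hx₂ : ∀ y, F x₂ ≤ F y) :
    A.mulVec x₁ = A.mulVec x₂ := by
  simp only [hF] at hx₁ hx₂
  have := (hf.strictConvexOn hl).map_eq_of_forall_le_comp (Matrix.toLpLin 2 2 A) hx₁ hx₂
  exact WithLp.toLp_injective 2 this
end

section
/- Suppose n, τ are positive integers and Λ ≥ 1 satisfies 4eΛ(τ+1)² ≤ √n, with ρ = (1 + 4eΛ(τ+1)/√n)² and θ = ∑_{t=1}^{τ} ρ^{t/2}. Then (√n(1 − ρ⁻¹) − 4)/(4(1+θ)Λ) ≥ 1/2. -/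
/-!
Write `ρ = q²` with `q = 1 + a`, `a = 4eΛ(τ+1)/√n`, so that `θ = ∑_{t=1}^τ qᵗ`. The hypothesis says
exactly `a ≤ 1/(τ+1)`, hence `q^(τ+1) ≤ e`. Then `(1+θ) q ≤ (τ+1) q^(τ+1) ≤ (τ+1) e`, while
`√n (1 - ρ⁻¹) ≥ √n (1 - q⁻¹) = 4eΛ(τ+1)/q`; half of this numerator pays for `2(1+θ)Λ q`, the other
half for `4q ≤ 8`.
-/

open Finset Real

lemma Real.sq_rpow_natCast_div_two {q : ℝ} (hq : 0 ≤ q) (t : ℕ) :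
    (q ^ 2) ^ ((t : ℝ) / 2) = q ^ t := by
  rw [Real.rpow_div_two_eq_sqrt _ (by positivity), Real.sqrt_sq hq, Real.rpow_natCast]

lemma one_add_sum_Icc_pow_le {q : ℝ} (hq : 1 ≤ q) (τ : ℕ) :
    1 + ∑ t ∈ Icc 1 τ, q ^ t ≤ (τ + 1) * q ^ τ := by
  have hsum : ∑ t ∈ Icc 1 τ, q ^ t ≤ ∑ _t ∈ Icc 1 τ, q ^ τ :=
    sum_le_sum fun t ht ↦ pow_le_pow_right₀ hq (mem_Icc.mp ht).2
  rw [sum_const, Nat.card_Icc, nsmul_eq_mul, Nat.add_sub_cancel] at hsum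
  linarith [one_le_pow₀ (n := τ) hq]

lemma one_add_pow_le_exp_one {a : ℝ} {m : ℕ} (ha : 0 ≤ a) (ham : a * m ≤ 1) :
    (1 + a) ^ m ≤ exp 1 :=
  calc (1 + a) ^ m ≤ exp a ^ m := by gcongr; linarith [add_one_le_exp a]
    _ = exp (a * m) := by rw [← exp_nat_mul, mul_comm]
    _ ≤ exp 1 := exp_le_exp.mpr ham

lemma one_add_sum_Icc_pow_mul_le_exp_one {a : ℝ} {τ : ℕ} (ha : 0 ≤ a) (haτ : a * (τ + 1) ≤ 1) :
    (1 + ∑ t ∈ Icc 1 τ, (1 + a) ^ t) * (1 + a) ≤ (τ + 1) * exp 1 :=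
  calc (1 + ∑ t ∈ Icc 1 τ, (1 + a) ^ t) * (1 + a) ≤ (τ + 1) * (1 + a) ^ τ * (1 + a) := by
        gcongr; exact one_add_sum_Icc_pow_le (by linarith) τ
    _ = (τ + 1) * (1 + a) ^ (τ + 1) := by ring
    _ ≤ (τ + 1) * exp 1 := by
        gcongr; exact one_add_pow_le_exp_one ha (by push_cast; exact haτ)

lemma div_one_add_le_one_sub_inv_sq {a : ℝ} (ha : 0 ≤ a) : a / (1 + a) ≤ 1 - ((1 + a) ^ 2)⁻¹ :=
  calc a / (1 + a) = 1 - (1 + a)⁻¹ := by field_simp; ring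
    _ ≤ 1 - ((1 + a) ^ 2)⁻¹ := by gcongr; nlinarith

theorem stmt_12_general (n τ : ℕ) (hτ : 0 < τ) (Λ : ℝ) (hΛ : 1 ≤ Λ)
    (hbound : 4 * Real.exp 1 * Λ * ((τ : ℝ) + 1) ^ 2 ≤ Real.sqrt n)
    (ρ : ℝ) (hρ : ρ = (1 + 4 * Real.exp 1 * Λ * ((τ : ℝ) + 1) / Real.sqrt n) ^ 2)
    (θ : ℝ) (hθ : θ = ∑ t ∈ Finset.Icc 1 τ, ρ ^ ((t : ℝ) / 2)) :
    (Real.sqrt n * (1 - ρ⁻¹) - 4) / (4 * (1 + θ) * Λ) ≥ 1 / 2 := by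
  set c := 4 * exp 1 * Λ * ((τ : ℝ) + 1)
  set a := c / √n
  have he : 2 ≤ exp 1 := by linarith [add_one_le_exp 1]
  have hτ' : (1 : ℝ) ≤ τ := by exact_mod_cast hτ
  have hc : 0 < c := by positivity
  have hs : 0 < √n := hc.trans_le (by nlinarith)
  have ha : 0 ≤ a := by positivity
  have haτ : a * (τ + 1) ≤ 1 := by rw [div_mul_eq_mul_div, div_le_one hs]; linarith
  have hθq : θ = ∑ t ∈ Icc 1 τ, (1 + a) ^ t := by
    rw [hθ, hρ]
    exact sum_congr rfl fun t _ ↦ Real.sq_rpow_natCast_div_two (by linarith) t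
  have hθ0 : 0 ≤ θ := hθq ▸ sum_nonneg fun t _ ↦ by positivity
  have hθe : (1 + θ) * (1 + a) ≤ (τ + 1) * exp 1 := hθq ▸ one_add_sum_Icc_pow_mul_le_exp_one ha haτ
  have hgain : c / (1 + a) ≤ √n * (1 - ρ⁻¹) :=
    calc c / (1 + a) = √n * (a / (1 + a)) := by rw [← mul_div_assoc, mul_div_cancel₀ c hs.ne']
      _ ≤ √n * (1 - ρ⁻¹) := hρ ▸ by gcongr; exact div_one_add_le_one_sub_inv_sq ha
  have hbudget : 2 * (1 + θ) * Λ + 4 ≤ c / (1 + a) := by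
    have heΛτ : 2 * 1 * 2 ≤ exp 1 * Λ * (τ + 1) := by gcongr; linarith
    rw [le_div_iff₀ (by linarith)]
    nlinarith [mul_le_mul_of_nonneg_left hθe (by linarith : (0 : ℝ) ≤ 2 * Λ)]
  rw [ge_iff_le, le_div_iff₀ (by positivity)]
  linarith

theorem stmt_12 (n τ : ℕ) (hn : 0 < n) (hτ : 0 < τ) (Λ : ℝ) (hΛ : 1 ≤ Λ)
    (hbound : 4 * Real.exp 1 * Λ * ((τ : ℝ) + 1) ^ 2 ≤ Real.sqrt n)
    (ρ : ℝ) (hρ : ρ = (1 + 4 * Real.exp 1 * Λ * ((τ : ℝ) + 1) / Real.sqrt n) ^ 2)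
    (θ : ℝ) (hθ : θ = ∑ t ∈ Finset.Icc 1 τ, ρ ^ ((t : ℝ) / 2)) :
    (Real.sqrt n * (1 - ρ⁻¹) - 4) / (4 * (1 + θ) * Λ) ≥ 1 / 2 :=
  stmt_12_general n τ hτ Λ hΛ hbound ρ hρ θ hθ
end

section
/- Let (S_j) and (F_j) be sequences of reals with F_j ≥ 0, F_j nonincreasing, S_j ≥ c·F_j for constants c > 0, and S_{j+1} ≤ S_j − b·F_j for a constant b > 0. Then for all j ≥ 0, F_j ≤ S_0/(c + b·j). -/
theorem stmt_14 (S F : ℕ → ℝ) (c b : ℝ) (hc : 0 < c) (hb : 0 < b)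
    (hF : ∀ j, 0 ≤ F j) (hmono : ∀ j, F (j + 1) ≤ F j)
    (hSF : ∀ j, c * F j ≤ S j)
    (hrec : ∀ j, S (j + 1) ≤ S j - b * F j) :
    ∀ j, F j ≤ S 0 / (c + b * j) := by
  have hanti : ∀ i j, i ≤ j → F j ≤ F i := by
    intro i j h
    induction h with
    | refl => exact le_refl _
    | step h ih => exact le_trans (hmono _) ih
  have key : ∀ j, S j + b * (j * F j) ≤ S 0 := by
    intro j
    induction j with
    | zero => simp
    | succ n ih =>
      have h1 : S (n+1) + b * ((n+1) * F (n+1)) ≤ S n - b * F n + b * ((n+1) * F (n+1)) := by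
        linarith [hrec n]
      have h2 : F (n+1) ≤ F n := hmono n
      have h3 : (n:ℝ) * F (n+1) ≤ n * F n := by
        apply mul_le_mul_of_nonneg_left h2 (Nat.cast_nonneg n)
      have : b * ((n+1 : ℕ) * F (n+1)) ≤ b * F n + b * (n * F n) := by
        push_cast
        nlinarith
      linarith
  intro j
  have hden : 0 < c + b * j := by positivity
  rw [le_div_iff₀ hden]
  have h1 : c * F j ≤ S j := hSF j
  have := key j
  nlinarith
end

section
/- The squared hinge loss F(x) = ∑ᵢ max(0, aᵢᵀx − yᵢ)² is optimally strongly convex: there exists l > 0 such that F(x) − F(P_S(x)) ≥ (l/2)‖x − P_S(x)‖² for all x, where S is the (assumed nonempty) set of minimizers of F. -/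
/-!
Fix a minimizer `x₀` of `F` and let `tᵢ = max 0 (aᵢᵀx₀ - yᵢ)`. Optimality of `x₀` along the
segment towards any `x` gives `∑ tᵢ aᵢᵀ(x - x₀) ≥ 0`, and expanding squares this yields
`∑ (max 0 (aᵢᵀx - yᵢ) - tᵢ)² ≤ F x - F x₀`. The polyhedron `{z | aᵢᵀz ≤ yᵢ + tᵢ}` lies in the
set `S` of minimizers, and the violation of its `i`-th constraint at `x` is at most
`|max 0 (aᵢᵀx - yᵢ) - tᵢ|`, so Hoffman's error bound turns the previous inequality into
`‖x - P_S x‖² ≤ C (F x - F x₀)`.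

Hoffman's bound: if `p` is the projection of `x` onto the polyhedron, then by Farkas and
Carathéodory `x - p` is a nonnegative combination of linearly independent active normals. Its
coefficients are bounded by a multiple of `‖x - p‖`, uniformly over the finitely many
independent subfamilies, and pairing `x - p` with itself gives `‖x - p‖ ≤ K ∑ᵢ violationᵢ(x)`.
-/

open Finset Filter Topology
open scoped InnerProductSpace

variable {H : Type*} [NormedAddCommGroup H] [InnerProductSpace ℝ H] {ι : Type*}

def conicHullOn (a : ι → H) (s : Finset ι) : PointedCone ℝ H :=
  .ofConeComb {x | ∃ l : ι → ℝ, (∀ i ∈ s, 0 ≤ l i) ∧ ∑ i ∈ s, l i • a i = x}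
    ⟨0, 0, by simp, by simp⟩ fun _ ⟨l, hl, hx⟩ _ ⟨l', hl', hy⟩ c hc d hd =>
      ⟨c • l + d • l', fun i hi => by
        simp only [Pi.add_apply, Pi.smul_apply, smul_eq_mul]
        exact add_nonneg (mul_nonneg hc (hl i hi)) (mul_nonneg hd (hl' i hi)),
       by simp [add_smul, mul_smul, sum_add_distrib, ← smul_sum, hx, hy]⟩

theorem mem_conicHullOn {a : ι → H} {s : Finset ι} {x : H} :
    x ∈ conicHullOn a s ↔ ∃ l : ι → ℝ, (∀ i ∈ s, 0 ≤ l i) ∧ ∑ i ∈ s, l i • a i = x :=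
  Iff.rfl

theorem conicHullOn_mono (a : ι → H) {s t : Finset ι} (hts : t ⊆ s) :
    conicHullOn a t ≤ conicHullOn a s := by
  classical
  rintro x ⟨l, hl, rfl⟩
  refine ⟨fun i => if i ∈ t then l i else 0, fun i _ => ?_, ?_⟩
  · by_cases hi : i ∈ t <;> simp [hi, hl i]
  · simp only [ite_smul, zero_smul]
    rw [Finset.sum_ite_mem, Finset.inter_eq_right.mpr hts]

theorem mem_conicHullOn_of_mem (a : ι → H) {s : Finset ι} {i : ι} (hi : i ∈ s) :
    a i ∈ conicHullOn a s := by
  classical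
  exact ⟨Pi.single i 1, fun j _ => by by_cases h : j = i <;> simp [h],
    by simp [Pi.single_apply, Finset.sum_ite_eq', hi]⟩

theorem exists_pos_of_not_linearIndepOn {a : ι → H} {s : Finset ι} (h : ¬LinearIndepOn ℝ a s) :
    ∃ c : ι → ℝ, ∑ i ∈ s, c i • a i = 0 ∧ ∃ j ∈ s, 0 < c j := by
  obtain ⟨c, hc, j, hj, hcj⟩ := not_linearIndepOn_finset_iff.mp h
  rcases hcj.lt_or_gt with hneg | hpos
  · exact ⟨-c, by simp [hc], j, hj, by simpa using hneg⟩
  · exact ⟨c, hc, j, hj, hpos⟩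

theorem exists_mem_conicHullOn_erase {a : ι → H} {s : Finset ι} [DecidableEq ι]
    (h : ¬LinearIndepOn ℝ a s) {x : H} (hx : x ∈ conicHullOn a s) :
    ∃ j ∈ s, x ∈ conicHullOn a (s.erase j) := by
  obtain ⟨l, hl, rfl⟩ := hx
  obtain ⟨c, hc, j₀, hj₀, hcj₀⟩ := exists_pos_of_not_linearIndepOn h
  set T := s.filter (fun i => 0 < c i)
  -- move along the relation `c` until the first coefficient hits zero
  obtain ⟨j, hjT, hjmin⟩ := T.exists_min_image (fun i => l i / c i) ⟨j₀, by simp [T, hj₀, hcj₀]⟩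
  obtain ⟨hj, hcj⟩ := Finset.mem_filter.mp hjT
  set θ := l j / c j
  have hθ : 0 ≤ θ := div_nonneg (hl j hj) hcj.le
  refine ⟨j, hj, l - θ • c, fun i hi => ?_, ?_⟩
  · have hi := Finset.mem_of_mem_erase hi
    simp only [Pi.sub_apply, Pi.smul_apply, smul_eq_mul, sub_nonneg]
    rcases le_or_gt (c i) 0 with hci | hci
    · nlinarith [hl i hi]
    · exact (le_div_iff₀ hci).mp (hjmin i (by simp [T, hi, hci]))
  · have hzero : (l - θ • c) j = 0 := by simp [θ, hcj.ne']
    rw [Finset.sum_erase _ (by rw [hzero, zero_smul])]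
    simp [sub_smul, mul_smul, Finset.sum_sub_distrib, ← Finset.smul_sum, hc]

theorem exists_linearIndepOn_of_mem_conicHullOn {a : ι → H} {s : Finset ι} {x : H}
    (hx : x ∈ conicHullOn a s) : ∃ t ⊆ s, LinearIndepOn ℝ a t ∧ x ∈ conicHullOn a t := by
  classical
  induction s using Finset.strongInduction with
  | H s ih =>
    by_cases hs : LinearIndepOn ℝ a s
    · exact ⟨s, subset_rfl, hs, hx⟩
    · obtain ⟨j, hj, hxj⟩ := exists_mem_conicHullOn_erase hs hx
      obtain ⟨t, hts, ht, hxt⟩ := ih _ (Finset.erase_ssubset hj) hxj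
      exact ⟨t, hts.trans (Finset.erase_subset _ _), ht, hxt⟩

theorem conicHullOn_eq_image (a : ι → H) (t : Finset ι) :
    (conicHullOn a t : Set H) = Fintype.linearCombination ℝ (fun i : t => a i) '' Set.Ici 0 := by
  ext x
  simp only [SetLike.mem_coe, mem_conicHullOn, Set.mem_image, Set.mem_Ici,
    Fintype.linearCombination_apply]
  constructor
  · rintro ⟨l, hl, rfl⟩
    exact ⟨fun i => l i, fun i => hl i i.2, Finset.sum_coe_sort t (fun i => l i • a i)⟩
  · rintro ⟨μ, hμ, rfl⟩
    classical
    refine ⟨fun i => if h : i ∈ t then μ ⟨i, h⟩ else 0,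
      fun i hi => by simpa [hi] using hμ ⟨i, hi⟩, ?_⟩
    rw [← Finset.sum_coe_sort]
    simp

theorem isClosed_conicHullOn_of_linearIndepOn {a : ι → H} {t : Finset ι}
    (ht : LinearIndepOn ℝ a t) : IsClosed (conicHullOn a t : Set H) := by
  rw [conicHullOn_eq_image]
  have hinj := linearIndependent_iff_injective_fintypeLinearCombination.mp ht
  exact (LinearMap.isClosedEmbedding_of_injective (LinearMap.ker_eq_bot.mpr hinj)).isClosedMap _
    isClosed_Ici

theorem isClosed_conicHullOn (a : ι → H) (s : Finset ι) : IsClosed (conicHullOn a s : Set H) := by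
  classical
  have hunion : (conicHullOn a s : Set H) =
      ⋃ t ∈ {t : Finset ι | t ⊆ s ∧ LinearIndepOn ℝ a t}, (conicHullOn a t : Set H) := by
    ext x
    simp only [Set.mem_iUnion, Set.mem_ofPred_eq, SetLike.mem_coe, exists_prop]
    constructor
    · intro hx
      obtain ⟨t, hts, ht, hxt⟩ := exists_linearIndepOn_of_mem_conicHullOn hx
      exact ⟨t, ⟨hts, ht⟩, hxt⟩
    · rintro ⟨t, ⟨hts, -⟩, hxt⟩
      exact conicHullOn_mono a hts hxt
  have hfin : {t : Finset ι | t ⊆ s ∧ LinearIndepOn ℝ a t}.Finite :=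
    s.powerset.finite_toSet.subset fun t ht => Finset.mem_powerset.mpr ht.1
  rw [hunion]
  exact hfin.isClosed_biUnion fun t ht => isClosed_conicHullOn_of_linearIndepOn ht.2

theorem exists_abs_le_norm_sum_of_linearIndepOn {a : ι → H} {t : Finset ι}
    (ht : LinearIndepOn ℝ a t) :
    ∃ K : ℝ, ∀ l : ι → ℝ, ∀ i ∈ t, |l i| ≤ K * ‖∑ j ∈ t, l j • a j‖ := by
  set f := Fintype.linearCombination ℝ (fun i : t => a i)
  have hinj := linearIndependent_iff_injective_fintypeLinearCombination.mp ht
  obtain ⟨K, -, hK⟩ := f.exists_antilipschitzWith (LinearMap.ker_eq_bot.mpr hinj)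
  refine ⟨K, fun l i hi => ?_⟩
  calc |l i| = ‖(fun j : t => l j) ⟨i, hi⟩‖ := (Real.norm_eq_abs _).symm
    _ ≤ ‖fun j : t => l j‖ := norm_le_pi_norm (fun j : t => l j) ⟨i, hi⟩
    _ ≤ K * ‖f fun j : t => l j‖ := ZeroHomClass.bound_of_antilipschitz f hK _
    _ = K * ‖∑ j ∈ t, l j • a j‖ := by
      rw [Fintype.linearCombination_apply, Finset.sum_coe_sort t (fun j => l j • a j)]

def polyhedron (a : ι → H) (b : ι → ℝ) : Set H := {z | ∀ i, ⟪a i, z⟫_ℝ ≤ b i}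

theorem polyhedron_eq_iInter (a : ι → H) (b : ι → ℝ) :
    polyhedron a b = ⋂ i, {z | ⟪a i, z⟫_ℝ ≤ b i} :=
  Set.ofPred_forall _

theorem isClosed_polyhedron (a : ι → H) (b : ι → ℝ) : IsClosed (polyhedron a b) := by
  rw [polyhedron_eq_iInter]
  exact isClosed_iInter fun i => isClosed_le (by fun_prop) continuous_const

theorem convex_polyhedron (a : ι → H) (b : ι → ℝ) : Convex ℝ (polyhedron a b) := by
  rw [polyhedron_eq_iInter]
  exact convex_iInter fun i => convex_halfSpace_le (innerₛₗ ℝ (a i)).isLinear (b i)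

theorem eventually_add_smul_mem_polyhedron [Finite ι] {a : ι → H} {b : ι → ℝ} {p d : H}
    (hp : p ∈ polyhedron a b) (hd : ∀ i, ⟪a i, p⟫_ℝ = b i → ⟪a i, d⟫_ℝ ≤ 0) :
    ∀ᶠ ε in 𝓝[>] (0 : ℝ), p + ε • d ∈ polyhedron a b := by
  simp only [polyhedron, Set.mem_ofPred_eq, eventually_all]
  intro i
  rcases (hp i).eq_or_lt with hact | hlt
  · filter_upwards [self_mem_nhdsWithin] with ε (hε : 0 < ε)
    rw [inner_add_right, real_inner_smul_right]
    nlinarith [hd i hact]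
  · have hcont : Continuous fun ε : ℝ => ⟪a i, p + ε • d⟫_ℝ := by fun_prop
    have hnear := (hcont.continuousAt (x := 0)).eventually_lt continuousAt_const
      (by simpa using hlt)
    exact nhdsWithin_le_nhds (hnear.mono fun ε h => h.le)

theorem mem_conicHullOn_of_forall_inner_sub_nonpos [CompleteSpace H] [Fintype ι] {a : ι → H}
    {b : ι → ℝ} {p v : H} (hp : p ∈ polyhedron a b)
    (hv : ∀ z ∈ polyhedron a b, ⟪v, z - p⟫_ℝ ≤ 0) :
    v ∈ conicHullOn a {i | ⟪a i, p⟫_ℝ = b i} := by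
  -- otherwise the direction `-y` separating `v` from the cone is feasible and `⟪v, -y⟫ > 0`
  by_contra hvK
  let K : ProperCone ℝ H := ⟨conicHullOn a {i | ⟪a i, p⟫_ℝ = b i}, isClosed_conicHullOn a _⟩
  obtain ⟨y, hyK, hvy⟩ := K.hyperplane_separation' hvK
  have hdir : ∀ i, ⟪a i, p⟫_ℝ = b i → ⟪a i, -y⟫_ℝ ≤ 0 := fun i hi => by
    rw [inner_neg_right, neg_nonpos]
    exact hyK _ (mem_conicHullOn_of_mem a (by simpa using hi))
  obtain ⟨ε, hεP, hε⟩ :=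
    ((eventually_add_smul_mem_polyhedron hp hdir).and self_mem_nhdsWithin).exists
  have hstep := hv _ hεP
  rw [add_sub_cancel_left, real_inner_smul_right, inner_neg_right] at hstep
  nlinarith [show (0 : ℝ) < ε from hε]

theorem exists_uniform_bound_of_linearIndepOn [Finite ι] (a : ι → H) :
    ∃ K : ℝ, 0 ≤ K ∧ ∀ t : Finset ι, LinearIndepOn ℝ a t →
      ∀ l : ι → ℝ, ∀ i ∈ t, |l i| ≤ K * ‖∑ j ∈ t, l j • a j‖ := by
  have hbound (t : Finset ι) : ∃ K : ℝ, LinearIndepOn ℝ a t →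
      ∀ l : ι → ℝ, ∀ i ∈ t, |l i| ≤ K * ‖∑ j ∈ t, l j • a j‖ := by
    by_cases ht : LinearIndepOn ℝ a t
    · obtain ⟨K, hK⟩ := exists_abs_le_norm_sum_of_linearIndepOn ht
      exact ⟨K, fun _ => hK⟩
    · exact ⟨0, fun h => absurd h ht⟩
  choose K hK using hbound
  obtain ⟨M, hM⟩ := Finite.exists_le K
  refine ⟨max M 0, le_max_right _ _, fun t ht l i hi => (hK t ht l i hi).trans ?_⟩
  exact mul_le_mul_of_nonneg_right ((hM t).trans (le_max_left _ _)) (norm_nonneg _)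

theorem exists_hoffman_constant [CompleteSpace H] [Fintype ι] (a : ι → H) {b : ι → ℝ}
    (hne : (polyhedron a b).Nonempty) :
    ∃ C : ℝ, ∀ x : H, ∃ p ∈ polyhedron a b, ‖x - p‖ ≤ C * ∑ i, max 0 (⟪a i, x⟫_ℝ - b i) := by
  obtain ⟨K, hK0, hK⟩ := exists_uniform_bound_of_linearIndepOn a
  refine ⟨K, fun x => ?_⟩
  obtain ⟨p, hp, hpmin⟩ := exists_norm_eq_iInf_of_complete_convex hne
    (isClosed_polyhedron a b).isComplete (convex_polyhedron a b) x
  have hcone := mem_conicHullOn_of_forall_inner_sub_nonpos hp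
    ((norm_eq_iInf_iff_real_inner_le_zero (convex_polyhedron a b) hp).mp hpmin)
  obtain ⟨t, htI, ht, l, hl, hv⟩ := exists_linearIndepOn_of_mem_conicHullOn hcone
  refine ⟨p, hp, ?_⟩
  set R : ι → ℝ := fun i => max 0 (⟪a i, x⟫_ℝ - b i)
  have hviol (i) (hi : i ∈ t) : ⟪a i, x - p⟫_ℝ ≤ R i := by
    have hact : ⟪a i, p⟫_ℝ = b i := (Finset.mem_filter.mp (htI hi)).2
    rw [inner_sub_right, hact]
    exact le_max_right _ _
  have hcoeff (i) (hi : i ∈ t) : l i ≤ K * ‖x - p‖ :=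
    (le_abs_self _).trans (hv ▸ hK t ht l i hi)
  have hsq : ‖x - p‖ * ‖x - p‖ ≤ ‖x - p‖ * (K * ∑ i, R i) := calc
    ‖x - p‖ * ‖x - p‖ = ∑ i ∈ t, l i * ⟪a i, x - p⟫_ℝ := by
      rw [← real_inner_self_eq_norm_mul_norm]
      nth_rw 1 [← hv]
      simp only [sum_inner, real_inner_smul_left]
    _ ≤ ∑ i ∈ t, K * ‖x - p‖ * R i := sum_le_sum fun i hi =>
      (mul_le_mul_of_nonneg_left (hviol i hi) (hl i hi)).trans
        (mul_le_mul_of_nonneg_right (hcoeff i hi) (le_max_left _ _))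
    _ ≤ ‖x - p‖ * (K * ∑ i, R i) := by
      rw [← mul_sum, mul_comm K, mul_assoc]
      gcongr
      exact subset_univ t
  rcases (norm_nonneg (x - p)).eq_or_lt with h0 | hpos
  · rw [← h0]
    exact mul_nonneg hK0 (sum_nonneg fun i _ => le_max_left _ _)
  · exact le_of_mul_le_mul_left hsq hpos

theorem sq_max_zero_add_le (r u : ℝ) : max 0 (r + u) ^ 2 ≤ (max 0 r + u) ^ 2 := by
  rcases le_total r 0 with hr | hr <;> rcases le_total (r + u) 0 with hru | hru <;>
    simp only [max_eq_left, max_eq_right, hr, hru] <;> nlinarith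

theorem max_zero_mul_self (r : ℝ) : max 0 r * r = max 0 r ^ 2 := by
  rcases le_total r 0 with hr | hr <;> simp [hr, sq]

theorem max_zero_sub_le_abs {r t : ℝ} (ht : 0 ≤ t) : max 0 (r - t) ≤ |max 0 r - t| := by
  rcases le_total r t with hrt | hrt
  · simp [hrt]
  · rw [max_eq_right (sub_nonneg.mpr hrt), max_eq_right (ht.trans hrt)]
    exact le_abs_self _

section SquaredHinge

variable [Fintype ι]

def sqHingeLoss (a : ι → H) (y : ι → ℝ) (x : H) : ℝ := ∑ i, max 0 (⟪a i, x⟫_ℝ - y i) ^ 2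

theorem sqHingeLoss_add_smul_le (a : ι → H) (y : ι → ℝ) (x d : H) (s : ℝ) :
    sqHingeLoss a y (x + s • d) ≤ sqHingeLoss a y x +
      s * (2 * ∑ i, max 0 (⟪a i, x⟫_ℝ - y i) * ⟪a i, d⟫_ℝ + s * ∑ i, ⟪a i, d⟫_ℝ ^ 2) := by
  calc sqHingeLoss a y (x + s • d)
      ≤ ∑ i, (max 0 (⟪a i, x⟫_ℝ - y i) + s * ⟪a i, d⟫_ℝ) ^ 2 := sum_le_sum fun i _ => by
        rw [inner_add_right, real_inner_smul_right, add_sub_right_comm]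
        exact sq_max_zero_add_le _ _
    _ = _ := by
      simp only [sqHingeLoss, mul_sum, ← sum_add_distrib]
      exact sum_congr rfl fun i _ => by ring

theorem sum_max_zero_mul_inner_nonneg {a : ι → H} {y : ι → ℝ} {x₀ : H}
    (hmin : ∀ z, sqHingeLoss a y x₀ ≤ sqHingeLoss a y z) (d : H) :
    0 ≤ ∑ i, max 0 (⟪a i, x₀⟫_ℝ - y i) * ⟪a i, d⟫_ℝ := by
  set L := ∑ i, max 0 (⟪a i, x₀⟫_ℝ - y i) * ⟪a i, d⟫_ℝ
  set K := ∑ i, ⟪a i, d⟫_ℝ ^ 2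
  have hslope : ∀ s > (0 : ℝ), 0 ≤ 2 * L + s * K := fun s hs => by
    have := (hmin _).trans (sqHingeLoss_add_smul_le a y x₀ d s)
    exact nonneg_of_mul_nonneg_right (by linarith) hs
  have hlim : Tendsto (fun s => 2 * L + s * K) (𝓝[>] 0) (𝓝 (2 * L)) := by
    have hcont : Continuous fun s : ℝ => 2 * L + s * K := by fun_prop
    simpa using (hcont.tendsto 0).mono_left nhdsWithin_le_nhds
  have := ge_of_tendsto hlim (eventually_nhdsWithin_of_forall hslope)
  linarith

theorem sum_sq_sub_le_sqHingeLoss_sub {a : ι → H} {y : ι → ℝ} {x₀ : H}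
    (hmin : ∀ z, sqHingeLoss a y x₀ ≤ sqHingeLoss a y z) (x : H) :
    ∑ i, (max 0 (⟪a i, x⟫_ℝ - y i) - max 0 (⟪a i, x₀⟫_ℝ - y i)) ^ 2 ≤
      sqHingeLoss a y x - sqHingeLoss a y x₀ := by
  set u := fun i => max 0 (⟪a i, x⟫_ℝ - y i)
  set t := fun i => max 0 (⟪a i, x₀⟫_ℝ - y i)
  have hterm (i) : t i * ⟪a i, x - x₀⟫_ℝ ≤ t i * (u i - t i) := by
    have hu : t i * (⟪a i, x⟫_ℝ - y i) ≤ t i * u i :=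
      mul_le_mul_of_nonneg_left (le_max_right _ _) (le_max_left _ _)
    have ht : t i * (⟪a i, x₀⟫_ℝ - y i) = t i ^ 2 := max_zero_mul_self _
    rw [inner_sub_right]
    nlinarith
  have hfirst := sum_max_zero_mul_inner_nonneg hmin (x - x₀)
  have hsum : ∑ i, (u i - t i) ^ 2 + 2 * ∑ i, t i * ⟪a i, x - x₀⟫_ℝ ≤
      ∑ i, u i ^ 2 - ∑ i, t i ^ 2 := by
    rw [mul_sum, ← sum_add_distrib, ← sum_sub_distrib]
    exact sum_le_sum fun i _ => by nlinarith [hterm i]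
  simp only [sqHingeLoss]
  linarith

theorem sqHingeLoss_le_of_mem_polyhedron {a : ι → H} {y t : ι → ℝ} (ht : 0 ≤ t) {z : H}
    (hz : z ∈ polyhedron a (y + t)) : sqHingeLoss a y z ≤ ∑ i, t i ^ 2 :=
  sum_le_sum fun i _ => pow_le_pow_left₀ (le_max_left _ _)
    (max_le (ht i) (by linarith [show ⟪a i, z⟫_ℝ ≤ y i + t i from hz i])) 2

theorem sq_sum_max_zero_sub_le (r t : ι → ℝ) (ht : 0 ≤ t) :
    (∑ i, max 0 (r i - t i)) ^ 2 ≤ Fintype.card ι * ∑ i, (max 0 (r i) - t i) ^ 2 := calc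
  (∑ i, max 0 (r i - t i)) ^ 2 ≤ (∑ i, |max 0 (r i) - t i|) ^ 2 :=
    pow_le_pow_left₀ (sum_nonneg fun i _ => le_max_left _ _)
      (sum_le_sum fun i _ => max_zero_sub_le_abs (ht i)) 2
  _ ≤ Fintype.card ι * ∑ i, |max 0 (r i) - t i| ^ 2 := sq_sum_le_card_mul_sum_sq
  _ = Fintype.card ι * ∑ i, (max 0 (r i) - t i) ^ 2 := by simp only [sq_abs]

theorem exists_minimizer_sq_norm_sub_le [CompleteSpace H] {a : ι → H} {y : ι → ℝ} {x₀ : H}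
    (hmin : ∀ z, sqHingeLoss a y x₀ ≤ sqHingeLoss a y z) :
    ∃ C : ℝ, 0 ≤ C ∧ ∀ x, ∃ p, (∀ z, sqHingeLoss a y p ≤ sqHingeLoss a y z) ∧
      ‖x - p‖ ^ 2 ≤ C * (sqHingeLoss a y x - sqHingeLoss a y x₀) := by
  set t : ι → ℝ := fun i => max 0 (⟪a i, x₀⟫_ℝ - y i)
  have ht : 0 ≤ t := fun i => le_max_left _ _
  obtain ⟨C, hC⟩ := exists_hoffman_constant a (b := y + t)
    ⟨x₀, fun i => by simp [t, ← sub_le_iff_le_add']⟩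
  refine ⟨C ^ 2 * Fintype.card ι, by positivity, fun x => ?_⟩
  obtain ⟨p, hpP, hxp⟩ := hC x
  refine ⟨p, fun z => (sqHingeLoss_le_of_mem_polyhedron ht hpP).trans (hmin z), ?_⟩
  calc ‖x - p‖ ^ 2 ≤ (C * ∑ i, max 0 (⟪a i, x⟫_ℝ - (y + t) i)) ^ 2 :=
        pow_le_pow_left₀ (norm_nonneg _) hxp 2
    _ ≤ C ^ 2 * (Fintype.card ι * ∑ i, (max 0 (⟪a i, x⟫_ℝ - y i) - t i) ^ 2) := by
      rw [mul_pow]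
      gcongr
      simpa [sub_add_eq_sub_sub] using sq_sum_max_zero_sub_le (fun i => ⟪a i, x⟫_ℝ - y i) t ht
    _ ≤ C ^ 2 * Fintype.card ι * (sqHingeLoss a y x - sqHingeLoss a y x₀) := by
      rw [mul_assoc]
      gcongr
      exact sum_sq_sub_le_sqHingeLoss_sub hmin x

end SquaredHinge

theorem stmt_17 {m n : ℕ} (a : Fin m → EuclideanSpace ℝ (Fin n)) (y : Fin m → ℝ)
    (F : EuclideanSpace ℝ (Fin n) → ℝ)
    (hF : ∀ x, F x = ∑ i, max 0 (inner ℝ (a i) x - y i) ^ 2)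
    (S : Set (EuclideanSpace ℝ (Fin n))) (hS : S = {x | ∀ z, F x ≤ F z})
    (hSne : S.Nonempty)
    (proj : EuclideanSpace ℝ (Fin n) → EuclideanSpace ℝ (Fin n))
    (hproj : ∀ x, proj x ∈ S ∧ ∀ z ∈ S, ‖x - proj x‖ ≤ ‖x - z‖) :
    ∃ l : ℝ, 0 < l ∧ ∀ x, F x - F (proj x) ≥ l / 2 * ‖x - proj x‖ ^ 2 := by
  obtain rfl : F = sqHingeLoss a y := funext hF
  subst hS
  obtain ⟨x₀, hmin⟩ := hSne
  obtain ⟨C, hC0, hC⟩ := exists_minimizer_sq_norm_sub_le hmin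
  refine ⟨2 / (C + 1), by positivity, fun x => ?_⟩
  obtain ⟨p, hpS, hxp⟩ := hC x
  obtain ⟨hprojS, hprojmin⟩ := hproj x
  have hFproj : sqHingeLoss a y (proj x) = sqHingeLoss a y x₀ :=
    le_antisymm (hprojS x₀) (hmin _)
  have hdist : ‖x - proj x‖ ^ 2 ≤ C * (sqHingeLoss a y x - sqHingeLoss a y x₀) :=
    (pow_le_pow_left₀ (norm_nonneg _) (hprojmin p hpS) 2).trans hxp
  have hgap : 0 ≤ sqHingeLoss a y x - sqHingeLoss a y x₀ := sub_nonneg.mpr (hmin x)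
  rw [hFproj, ge_iff_le, show 2 / (C + 1) / 2 * ‖x - proj x‖ ^ 2 =
    ‖x - proj x‖ ^ 2 / (C + 1) by ring, div_le_iff₀ (by positivity)]
  nlinarith
end
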